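/- arXiv:1308.1702 — 3 statements merged into one kernel-verified Lean document; each statement's English description precedes it below -/
import Mathlib

section
/- With α_n = 10^(2^n), the infinite product ∏_{i=1}^{∞} α_i/(α_i + 1) converges to a value strictly greater than 1/2; consequently, for all n, ∏_{i=1}^{n} α_i / ∏_{i=1}^{n} (α_i+1) > 1/2. -/
open Filter

/-- `α n = 10^(2^n)`. -/
def alf (n : ℕ) : ℕ := 10 ^ (2 ^ n)

/-!
Writing `α_i/(α_i+1) = 1 - 1/(α_i+1)`, the Weierstrass product inequality
`∏ (1 - x_i) ≥ 1 - ∑ x_i` bounds every partial product below by `1 - ∑_{i ≥ 1} 100⁻ⁱ = 98/99`,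
since `α_i ≥ 100^i`. The partial products decrease, so they converge to a limit `≥ 98/99`.
-/

namespace Finset

variable {R : Type*} [CommRing R] [LinearOrder R] [IsStrictOrderedRing R]

theorem one_sub_sum_le_prod_one_sub {ι : Type*} (s : Finset ι) {f : ι → R}
    (h0 : ∀ i ∈ s, 0 ≤ f i) (h1 : ∀ i ∈ s, f i ≤ 1) :
    1 - ∑ i ∈ s, f i ≤ ∏ i ∈ s, (1 - f i) := by
  classical
  induction s using Finset.induction_on with
  | empty => simp
  | insert a s ha ih =>
    rw [sum_insert ha, prod_insert ha]
    have hrest := ih (fun i hi => h0 i (mem_insert_of_mem hi))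
      (fun i hi => h1 i (mem_insert_of_mem hi))
    have hfa : 0 ≤ 1 - f a := sub_nonneg.2 (h1 a (mem_insert_self a s))
    have hsum : 0 ≤ f a * ∑ i ∈ s, f i :=
      mul_nonneg (h0 a (mem_insert_self a s)) (sum_nonneg fun i hi => h0 i (mem_insert_of_mem hi))
    nlinarith [mul_le_mul_of_nonneg_left hrest hfa]

theorem antitone_prod_Icc_of_le_one {f : ℕ → R} (h0 : ∀ i, 0 ≤ f i) (h1 : ∀ i, f i ≤ 1) :
    Antitone fun n => ∏ i ∈ Icc 1 n, f i := by
  refine antitone_nat_of_succ_le fun n => ?_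
  rw [prod_Icc_succ_top (Nat.le_add_left 1 n)]
  exact mul_le_of_le_one_right (prod_nonneg fun i _ => h0 i) (h1 _)

end Finset

theorem hundred_pow_le_alf (n : ℕ) : 100 ^ n ≤ alf n := by
  calc 100 ^ n = 10 ^ (2 * n) := by rw [pow_mul]; norm_num
    _ ≤ 10 ^ (2 ^ n) := Nat.pow_le_pow_right (by norm_num) ?_
  rcases n with _ | n
  · norm_num
  · rw [pow_succ, mul_comm]
    exact Nat.mul_le_mul_right 2 n.lt_two_pow_self

theorem one_div_alf_add_one_le (n : ℕ) : 1 / ((alf n : ℝ) + 1) ≤ (1 / 100) ^ n := by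
  rw [one_div_pow, one_div_le_one_div (by positivity) (by positivity)]
  have : ((100 ^ n : ℕ) : ℝ) ≤ alf n := by exact_mod_cast hundred_pow_le_alf n
  push_cast at this
  linarith

theorem alf_div_alf_add_one_mem_Icc (n : ℕ) :
    (alf n : ℝ) / ((alf n : ℝ) + 1) ∈ Set.Icc 0 1 :=
  ⟨by positivity, div_le_one_of_le₀ (by linarith) (by positivity)⟩

theorem le_prod_alf_div_alf_add_one (n : ℕ) :
    (98 : ℝ) / 99 ≤ ∏ i ∈ Finset.Icc 1 n, ((alf i : ℝ) / ((alf i : ℝ) + 1)) := by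
  have hfactor (i : ℕ) : (alf i : ℝ) / ((alf i : ℝ) + 1) = 1 - 1 / ((alf i : ℝ) + 1) := by
    field_simp
    ring
  have hgeom : ∑ i ∈ Finset.Icc 1 n, ((1 : ℝ) / 100) ^ i ≤ 1 / 99 := by
    rw [← Finset.Ico_add_one_right_eq_Icc]
    refine (geom_sum_Ico_le_of_lt_one (by norm_num) (by norm_num)).trans_eq ?_
    norm_num
  calc (98 : ℝ) / 99 ≤ 1 - ∑ i ∈ Finset.Icc 1 n, 1 / ((alf i : ℝ) + 1) := by
        linarith [Finset.sum_le_sum fun i (_ : i ∈ Finset.Icc 1 n) => one_div_alf_add_one_le i]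
    _ ≤ ∏ i ∈ Finset.Icc 1 n, (1 - 1 / ((alf i : ℝ) + 1)) :=
        Finset.one_sub_sum_le_prod_one_sub _ (fun i _ => by positivity)
          (fun i _ => div_le_one_of_le₀ (by linarith [(alf i).cast_nonneg (α := ℝ)]) (by positivity))
    _ = _ := by simp only [hfactor]

/-- With `α_i = 10^(2^i)`, the infinite product `∏_{i=1}^∞ α_i/(α_i+1)` converges to a
limit strictly greater than `1/2`, and consequently all its partial products (quotients
of the partial products of numerators and denominators) are strictly greater than `1/2`. -/
theorem alf_product_gt_half :
    (∃ L : ℝ, 1 / 2 < L ∧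
      Tendsto (fun n : ℕ => ∏ i ∈ Finset.Icc 1 n, ((alf i : ℝ) / ((alf i : ℝ) + 1)))
        atTop (nhds L)) ∧
    ∀ n : ℕ, 1 / 2 <
      (∏ i ∈ Finset.Icc 1 n, (alf i : ℝ)) / (∏ i ∈ Finset.Icc 1 n, ((alf i : ℝ) + 1)) := by
  have hanti := Finset.antitone_prod_Icc_of_le_one (fun i => (alf_div_alf_add_one_mem_Icc i).1)
    fun i => (alf_div_alf_add_one_mem_Icc i).2
  have hbdd : BddBelow (Set.range fun n => ∏ i ∈ Finset.Icc 1 n,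
      ((alf i : ℝ) / ((alf i : ℝ) + 1))) :=
    ⟨98 / 99, Set.forall_mem_range.2 le_prod_alf_div_alf_add_one⟩
  refine ⟨⟨_, ?_, tendsto_atTop_ciInf hanti hbdd⟩, fun n => ?_⟩
  · linarith [le_ciInf le_prod_alf_div_alf_add_one]
  · rw [← Finset.prod_div_distrib]
    linarith [le_prod_alf_div_alf_add_one n]
end

section
/- Let Σ ⊆ {0,1}^Z be the subshift generated by the words u_n (u_0 = 1, u_{n+1} = u_n^(α_n) 0^(n+1) u_n^(α_n), α_n = 10^(2^n)), i.e. Σ = {x : every finite subword of x is a subword of some u_n}. Then for every r ∈ N there is a bound α(r) such that in every configuration x ∈ Σ, the set of positions i where x restricted to [i, i+r] is the all-zero word 0^(r+1) has gaps bounded by α(r) (i.e. this set is α(r)-syndetic). -/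
/-- The words `u_0 = 1` and `u_{n+1} = u_n^(α_n) · 0^(n+1) · u_n^(α_n)`. -/
def uWord : ℕ → List Bool
  | 0 => [true]
  | n + 1 =>
      (List.replicate (alf n) (uWord n)).flatten ++ List.replicate (n + 1) false ++
        (List.replicate (alf n) (uWord n)).flatten

/-- The subshift generated by the words `u_n`: configurations all of whose finite
subwords are subwords of some `u_n`. -/
def SigmaU : Set (ℤ → Bool) :=
  {x | ∀ (i : ℤ) (m : ℕ), ∃ n : ℕ, (List.ofFn fun j : Fin m => x (i + (j : ℤ))) <:+: uWord n}

/-- Words built from `u_{r+1}` blocks and all-zero blocks of length at least `r+2`. -/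
inductive Good (r : ℕ) : List Bool → Prop
  | base : Good r (uWord (r + 1))
  | zeros (m : ℕ) (h : r + 2 ≤ m) : Good r (List.replicate m false)
  | app {u v : List Bool} : Good r u → Good r v → Good r (u ++ v)

lemma flatten_replicate_succ {α} (k : ℕ) (w : List α) :
    (List.replicate (k + 1) w).flatten = w ++ (List.replicate k w).flatten := by
  simp [List.replicate_succ]

lemma good_pow (r k : ℕ) {w : List Bool} (hw : Good r w) :
    Good r ((List.replicate (k + 1) w).flatten) := by
  induction k with
  | zero => simpa [flatten_replicate_succ] using hw
  | succ k ih =>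
      rw [flatten_replicate_succ]
      exact Good.app hw ih

lemma good_uWord (r : ℕ) : ∀ n, r + 1 ≤ n → Good r (uWord n) := by
  intro n hn
  induction n with
  | zero => omega
  | succ n ih =>
      rcases Nat.lt_or_ge (n + 1) (r + 2) with h | h
      · have : n + 1 = r + 1 := by omega
        rw [this]; exact Good.base
      · have hgn : Good r (uWord n) := ih (by omega)
        have hpow : Good r ((List.replicate (alf n) (uWord n)).flatten) := by
          obtain ⟨k, hk⟩ : ∃ k, alf n = k + 1 := by
            have : 1 ≤ alf n := Nat.one_le_pow _ _ (by norm_num)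
            exact ⟨alf n - 1, by omega⟩
          rw [hk]; exact good_pow r k hgn
        rw [uWord]
        exact Good.app (Good.app hpow (Good.zeros (n + 1) h)) hpow

lemma zrep_infix_replicate (r k : ℕ) (h : r + 1 ≤ k) :
    List.replicate (r + 1) false <:+: List.replicate k false := by
  have : List.replicate k false
      = List.replicate (r + 1) false ++ List.replicate (k - (r + 1)) false := by
    rw [← List.replicate_add]; congr 1; omega
  rw [this]
  exact (List.prefix_append _ _).isInfix

lemma zrep_infix_of_sublist (r : ℕ) {s : List Bool} {k : ℕ}
    (hs : List.Sublist s (List.replicate k false)) (hlen : r + 1 ≤ s.length) :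
    List.replicate (r + 1) false <:+: s := by
  have : s = List.replicate s.length false :=
    List.eq_replicate_of_mem (fun b hb => List.eq_of_mem_replicate (hs.subset hb))
  rw [this]
  exact zrep_infix_replicate r s.length hlen

lemma zrep_infix_u (r : ℕ) : List.replicate (r + 1) false <:+: uWord (r + 1) := by
  rw [uWord]
  exact ⟨(List.replicate (alf r) (uWord r)).flatten,
    (List.replicate (alf r) (uWord r)).flatten, rfl⟩

lemma L_ge (r : ℕ) : r + 1 ≤ (uWord (r + 1)).length := by
  have := (zrep_infix_u r).length_le
  simpa using this

/-- The key combinatorial lemma about Good words. -/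
lemma good_main (r : ℕ) {w : List Bool} (h : Good r w) :
    (List.replicate (r + 1) false <:+: w) ∧
    (∀ s, s <:+ w → (uWord (r + 1)).length ≤ s.length →
        List.replicate (r + 1) false <:+: s) ∧
    (∀ p, p <+: w → (uWord (r + 1)).length ≤ p.length →
        List.replicate (r + 1) false <:+: p) ∧
    (∀ f, f <:+: w → 2 * (uWord (r + 1)).length + r + 1 ≤ f.length →
        List.replicate (r + 1) false <:+: f) := by
  set L := (uWord (r + 1)).length with hL
  induction h with
  | base =>
      refine ⟨zrep_infix_u r, ?_, ?_, ?_⟩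
      · intro s hs hlen
        have : s = uWord (r + 1) :=
          hs.eq_of_length (le_antisymm hs.length_le hlen)
        rw [this]; exact zrep_infix_u r
      · intro p hp hlen
        have : p = uWord (r + 1) :=
          hp.eq_of_length (le_antisymm hp.length_le hlen)
        rw [this]; exact zrep_infix_u r
      · intro f hf hlen
        have := hf.length_le
        omega
  | zeros m hm =>
      have hL1 : r + 1 ≤ L := L_ge r
      refine ⟨zrep_infix_replicate r m (by omega), ?_, ?_, ?_⟩
      · intro s hs hlen
        exact zrep_infix_of_sublist r hs.sublist (by omega)
      · intro p hp hlen
        exact zrep_infix_of_sublist r hp.sublist (by omega)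
      · intro f hf hlen
        exact zrep_infix_of_sublist r hf.sublist (by omega)
  | @app u v hu hv ihu ihv =>
      obtain ⟨cu, su, pu, fu⟩ := ihu
      obtain ⟨cv, sv, pv, fv⟩ := ihv
      refine ⟨cu.trans (List.prefix_append u v).isInfix, ?_, ?_, ?_⟩
      · -- suffixes
        intro s hs hlen
        obtain ⟨t, ht⟩ := hs
        rcases List.append_eq_append_iff.1 ht with ⟨a', _, hs'⟩ | ⟨c, _, hc⟩
        · -- s = a' ++ v
          rw [hs']
          exact cv.trans (List.suffix_append a' v).isInfix
        · -- v = c ++ s : s is a suffix of v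
          exact sv s ⟨c, hc.symm⟩ hlen
      · -- prefixes
        intro p hp hlen
        obtain ⟨t, ht⟩ := hp
        rcases List.append_eq_append_iff.1 ht with ⟨a', hu', _⟩ | ⟨c, hp', _⟩
        · -- u = p ++ a' : p is a prefix of u
          exact pu p ⟨a', hu'.symm⟩ hlen
        · -- p = u ++ c
          rw [hp']
          exact cu.trans (List.prefix_append u c).isInfix
      · -- factors
        intro f hf hlen
        obtain ⟨s, t, hst⟩ := hf
        -- (s ++ f) ++ t = u ++ v
        rcases List.append_eq_append_iff.1 hst with ⟨a', hsf, hv'⟩ | ⟨c, hsf, ht'⟩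
        · -- u = (s ++ f) ++ a' : f infix of u
          exact fu f ⟨s, a', hsf.symm⟩ hlen
        ·
          -- append_eq_append_iff : a ++ b = c ++ d → ... with a = s ++ f, b = t, c = u, d = v
          -- case 2 : ∃ c', s ++ f = u ++ c' ∧ v = c' ++ t
          rcases List.append_eq_append_iff.1 hsf with ⟨b', hub, hfb⟩ | ⟨d, hsd, hcd⟩
          · -- u = s ++ b', f = b' ++ c with b' <:+ u, c <+: v
            by_cases hb : L ≤ b'.length
            · have : List.replicate (r + 1) false <:+: b' := su b' ⟨s, hub.symm⟩ hb
              rw [hfb]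
              exact this.trans (List.prefix_append b' c).isInfix
            · have hc : L ≤ c.length := by
                have : f.length = b'.length + c.length := by
                  rw [hfb]; simp
                omega
              have : List.replicate (r + 1) false <:+: c := pv c ⟨t, ht'.symm⟩ hc
              rw [hfb]
              exact this.trans (List.suffix_append b' c).isInfix
          · -- s = u ++ d, c = d ++ f : f infix of v
            exact fv f ⟨d, t, by rw [ht', hcd]⟩ hlen
  
lemma uWord_prefix_succ (n : ℕ) : uWord n <+: uWord (n + 1) := by
  rw [uWord]
  obtain ⟨k, hk⟩ : ∃ k, alf n = k + 1 := by
    have : 1 ≤ alf n := Nat.one_le_pow _ _ (by norm_num)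
    exact ⟨alf n - 1, by omega⟩
  rw [hk, flatten_replicate_succ, List.append_assoc, List.append_assoc]
  exact List.prefix_append _ _

lemma uWord_prefix (m n : ℕ) (h : m ≤ n) : uWord m <+: uWord n := by
  induction n with
  | zero => have : m = 0 := by omega
            rw [this]
  | succ n ih =>
      rcases Nat.lt_or_ge m (n + 1) with h' | h'
      · exact (ih (by omega)).trans (uWord_prefix_succ n)
      · have : m = n + 1 := by omega
        rw [this]

/-- In the subshift generated by the `u_n`, for every `r` there is a bound `a` such that
in every configuration, the set of positions where a block `0^(r+1)` starts is
`a`-syndetic (has gaps bounded by `a`). -/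
theorem zeros_syndetic :
    ∀ r : ℕ, ∃ a : ℕ, ∀ x ∈ SigmaU, ∀ i : ℤ,
      ∃ j : ℤ, i ≤ j ∧ j ≤ i + a ∧ ∀ t : Fin (r + 1), x (j + (t : ℤ)) = false := by
  intro r
  set L := (uWord (r + 1)).length with hL
  refine ⟨2 * L, ?_⟩
  intro x hx i
  obtain ⟨n, hn⟩ := hx i (2 * L + r + 1)
  set w : List Bool := List.ofFn fun j : Fin (2 * L + r + 1) => x (i + (j : ℤ)) with hw
  have hwlen : w.length = 2 * L + r + 1 := by simp [hw]
  have hinf : w <:+: uWord (max n (r + 1)) :=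
    hn.trans (uWord_prefix n _ (le_max_left _ _)).isInfix
  have hgood : Good r (uWord (max n (r + 1))) :=
    good_uWord r _ (le_max_right _ _)
  have hz : List.replicate (r + 1) false <:+: w :=
    (good_main r hgood).2.2.2 w hinf (by omega)
  obtain ⟨s, t, hst⟩ := hz
  have hslen : s.length ≤ 2 * L := by
    have := congrArg List.length hst
    simp [hwlen] at this
    omega
  refine ⟨i + s.length, by omega, by push_cast; omega, ?_⟩
  intro tt
  have hlt : s.length + (tt : ℕ) < w.length := by
    have := congrArg List.length hst
    simp [hwlen] at this
    omega
  have hq : w[s.length + (tt : ℕ)]? = some false := by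
    rw [← hst, List.append_assoc,
      List.getElem?_append_right (by simp : s.length ≤ s.length + (tt : ℕ))]
    have htlt : (tt : ℕ) < r + 1 := tt.isLt
    simp [List.getElem?_append, htlt, List.getElem?_replicate]
  have hq2 : w[s.length + (tt : ℕ)]? =
      some (x (i + ((s.length + (tt : ℕ) : ℕ) : ℤ))) := by
    rw [hw]
    rw [List.getElem?_ofFn]
    have hlt' : s.length + (tt : ℕ) < 2 * L + r + 1 := by
      rw [hwlen] at hlt; exact hlt
    simp [List.ofFnNthVal, hlt']
  have hval : x (i + ((s.length + (tt : ℕ) : ℕ) : ℤ)) = false := by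
    rw [hq2] at hq
    exact Option.some.inj hq
  have h2 : i + (s.length : ℤ) + ((tt : ℕ) : ℤ)
      = i + ((s.length + (tt : ℕ) : ℕ) : ℤ) := by push_cast; ring
  rw [h2]
  exact hval
end

section
/- If a one-dimensional subshift Σ ⊆ A^Z is φ-realizable by projective subaction of a 2-dimensional sofic subshift with φ(k) ∈ o(log log k), then the complement of the language of Σ is decidable in space o(log log k), and hence (by the space hierarchy collapse below log log) L(Σ) is a regular language, so Σ is sofic. -/
/-- A two-dimensional pattern over the alphabet `B`. -/
structure Pat2 (B : Type*) where
  supp : Finset (ℤ × ℤ)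
  val : ℤ × ℤ → B

/-- The configuration `x` avoids all patterns of `F`. -/
def avoids2 {B : Type*} (F : Set (Pat2 B)) (x : ℤ × ℤ → B) : Prop :=
  ∀ p ∈ F, ¬ ∃ t, ∀ u ∈ p.supp, p.val u = x (u + t)

/-- The configuration `x` avoids `F` wherever the translated support fits inside the
strip `ℤ × [-n,n]`. -/
def avoidsStrip2 {B : Type*} (F : Set (Pat2 B)) (n : ℕ) (x : ℤ × ℤ → B) : Prop :=
  ∀ p ∈ F, ∀ t : ℤ × ℤ,
    (∀ u ∈ p.supp, |(u + t).2| ≤ (n : ℤ)) →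
    ¬ (∀ u ∈ p.supp, p.val u = x (u + t))

/-- The one-dimensional projective subaction of the two-dimensional SFT `T_F` composed
with the letter-to-letter factor map `π`. -/
def SArow2 {A B : Type*} (F : Set (Pat2 B)) (π : B → A) : Set (ℤ → A) :=
  {y | ∃ x : ℤ × ℤ → B, avoids2 F x ∧ ∀ i : ℤ, y i = π (x (i, 0))}

/-- The width-`n` strip approximation of the previous projective subaction. -/
def RowApprox2 {A B : Type*} (F : Set (Pat2 B)) (π : B → A) (n : ℕ) : Set (ℤ → A) :=
  {y | ∃ x : ℤ × ℤ → B, avoidsStrip2 F n x ∧ ∀ i : ℤ, y i = π (x (i, 0))}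

/-- The language of words of length `k` of a set of configurations of `A^ℤ`. -/
def wordLang {A : Type*} (S : Set (ℤ → A)) (k : ℕ) : Set (Fin k → A) :=
  {w | ∃ y ∈ S, ∃ t : ℤ, ∀ i : Fin k, w i = y (t + (i : ℤ))}

/-!
The strip approximations `Σₙ = RowApprox2 F π n` decrease to `Σ = SArow2 F π`, and each of them
is sofic: it is read off the walks of a finite graph whose vertices are the `(2W+1) × (2n+1)`
windows of a strip configuration, `W` bounding the width of the forbidden patterns.

Let `w` be a shortest word of `L(Σ_{n₀}) \ L(Σ)` and `m = φ |w|`, so that `w ∉ L(Σₘ)` and `m > n₀`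
for a suitable `n₀`. Record, for each prefix of `w`, the pair of its transfer relations in the
graphs of `Σ_{n₀}` and `Σₘ`. If two prefixes give the same pair, cutting out the factor between
them yields a shorter word of `L(Σ_{n₀})`, hence of `L(Σ) ⊆ L(Σₘ)`, and gluing the factor back
shows `w ∈ L(Σₘ)`. So `|w|` is at most doubly exponential in `m`, which `φ = o(log log)` forbids
for long words. Hence `L(Σ_{n₀}) ⊆ L(Σ)`, and by compactness `Σ = Σ_{n₀}` is sofic. This is the
crossing-sequence argument behind the `o(log log n)` space gap, run directly on the graphs.
-/

open SetRel Filter Asymptotics Topology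

section PathSet

variable {A C D : Type*} {E : SetRel C C} {ρ : C → A}

def IsWalk (E : SetRel C C) (z : ℤ → C) : Prop := ∀ i, (z i, z (i + 1)) ∈ E

def pathSet (E : SetRel C C) (ρ : C → A) : Set (ℤ → A) :=
  {y | ∃ z : ℤ → C, IsWalk E z ∧ ∀ i, y i = ρ (z i)}

lemma IsWalk.shift {z : ℤ → C} (hz : IsWalk E z) (s : ℤ) : IsWalk E (fun i => z (s + i)) :=
  fun i => by simpa only [add_assoc] using hz (s + i)

lemma IsWalk.glue {z₁ z₂ : ℤ → C} (h₁ : IsWalk E z₁) (h₂ : IsWalk E z₂) {j : ℤ}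
    (hj : z₁ j = z₂ 0) :
    ∃ z, IsWalk E z ∧ (∀ i ≤ j, z i = z₁ i) ∧ ∀ i ≥ j, z i = z₂ (i - j) := by
  have hgt : ∀ i ≥ j, (if i ≤ j then z₁ i else z₂ (i - j)) = z₂ (i - j) := by
    intro i hi
    split_ifs with h
    · rw [le_antisymm h hi, sub_self, hj]
    · rfl
  refine ⟨fun i => if i ≤ j then z₁ i else z₂ (i - j), fun i => ?_,
    fun i hi => if_pos hi, hgt⟩
  rcases lt_or_ge i j with hi | hi
  · simpa only [if_pos hi.le, if_pos (Int.add_one_le_of_lt hi)] using h₁ i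
  · have hsucc : i + 1 - j = i - j + 1 := by ring
    simp only [hgt i hi, hgt (i + 1) (by omega)]
    rw [hsucc]
    exact h₂ (i - j)

lemma pathSet_equiv (e : C ≃ D) (E : SetRel C C) (ρ : C → A) :
    pathSet (Prod.map e.symm e.symm ⁻¹' E) (ρ ∘ e.symm) = pathSet E ρ := by
  ext y
  constructor
  · rintro ⟨z, hz, hy⟩
    exact ⟨e.symm ∘ z, hz, hy⟩
  · rintro ⟨z, hz, hy⟩
    exact ⟨e ∘ z, fun i => by simpa using hz i, fun i => by simpa using hy i⟩

lemma exists_pathSet_eq_of_fintype [Fintype C] (E : SetRel C C) (ρ : C → A) :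
    ∃ (E' : SetRel (Fin (Fintype.card C)) (Fin (Fintype.card C))) (ρ' : Fin (Fintype.card C) → A),
      pathSet E' ρ' = pathSet E ρ :=
  ⟨_, _, pathSet_equiv (Fintype.equivFin C) E ρ⟩

end PathSet

section Transfer

variable {A C D : Type*}

def listLang (S : Set (ℤ → A)) : Set (List A) :=
  {w | ∃ y ∈ S, ∃ t : ℤ, ∀ i (hi : i < w.length), w[i] = y (t + i)}

lemma mem_listLang_iff_get_mem_wordLang {S : Set (ℤ → A)} {w : List A} :
    w ∈ listLang S ↔ w.get ∈ wordLang S w.length := by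
  simp [listLang, wordLang, Fin.forall_iff]

lemma listLang_mono {S S' : Set (ℤ → A)} (h : S ⊆ S') : listLang S ⊆ listLang S' :=
  fun _ ⟨y, hy, t, ht⟩ => ⟨y, h hy, t, ht⟩

variable (E : SetRel C C) (ρ : C → A)

/-- Walks are bi-infinite, so that `transfer` is multiplicative and detects the language. -/
def transfer (w : List A) : SetRel C C :=
  {p | ∃ z : ℤ → C, IsWalk E z ∧ z 0 = p.1 ∧ z w.length = p.2 ∧
    ∀ i (hi : i < w.length), w[i] = ρ (z i)}

variable {E ρ}

lemma mem_listLang_pathSet_iff {w : List A} :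
    w ∈ listLang (pathSet E ρ) ↔ (transfer E ρ w).Nonempty := by
  constructor
  · rintro ⟨y, ⟨z, hz, hy⟩, t, ht⟩
    exact ⟨(z t, z (t + w.length)), fun i => z (t + i), hz.shift t, by simp, rfl,
      fun i hi => (ht i hi).trans (hy _)⟩
  · rintro ⟨_, z, hz, -, -, hw⟩
    exact ⟨ρ ∘ z, ⟨z, hz, fun _ => rfl⟩, 0, fun i hi => by simpa using hw i hi⟩

lemma transfer_append (u v : List A) :
    transfer E ρ (u ++ v) = transfer E ρ u ○ transfer E ρ v := by
  ext ⟨c, c'⟩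
  constructor
  · rintro ⟨z, hz, h0, hlen, hw⟩
    refine ⟨z u.length, ⟨z, hz, h0, rfl, fun i hi => ?_⟩,
      ⟨fun i => z (u.length + i), hz.shift _, by simp, ?_, fun i hi => ?_⟩⟩
    · exact (List.getElem_append_left hi).symm.trans (hw i (by simp; omega))
    · rw [← hlen, List.length_append, Nat.cast_add]
    · have := hw (u.length + i) (by simp; omega)
      simpa [List.getElem_append_right] using this
  · rintro ⟨d, ⟨z₁, hz₁, h₁0, h₁d, hu⟩, ⟨z₂, hz₂, h₂d, h₂1, hv⟩⟩
    obtain ⟨z, hz, hle, hge⟩ := hz₁.glue hz₂ (h₁d.trans h₂d.symm)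
    refine ⟨z, hz, by rw [hle 0 (by simp), h₁0], ?_, fun i hi => ?_⟩
    · rw [hge _ (by simp), ← h₂1]; simp
    · rcases lt_or_ge i u.length with h | h
      · rw [List.getElem_append_left h, hle _ (by omega), hu i h]
      · rw [List.getElem_append_right h, hge _ (by omega), hv _ (by simp at hi; omega)]
        congr 2; omega

lemma transfer_take_append_drop {w : List A} {a b : ℕ}
    (h : transfer E ρ (w.take a) = transfer E ρ (w.take b)) :
    transfer E ρ (w.take a ++ w.drop b) = transfer E ρ w := by
  rw [transfer_append, h, ← transfer_append, List.take_append_drop]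

theorem length_lt_of_forall_shorter_mem [Fintype C] [Fintype D]
    {E' : SetRel D D} {ρ' : D → A} {w : List A}
    (hw : w ∈ listLang (pathSet E ρ)) (hw' : w ∉ listLang (pathSet E' ρ'))
    (hshort : ∀ v : List A, v.length < w.length →
      v ∈ listLang (pathSet E ρ) → v ∈ listLang (pathSet E' ρ')) :
    w.length < 2 ^ (Fintype.card C * Fintype.card C) * 2 ^ (Fintype.card D * Fintype.card D) := by
  classical
  by_contra! hlong
  let f : Fin (w.length + 1) → SetRel C C × SetRel D D := fun j =>
    (transfer E ρ (w.take j), transfer E' ρ' (w.take j))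
  obtain ⟨j₁, j₂, hne, hf⟩ := Fintype.exists_ne_map_eq_of_card_lt f (by
    simpa [Fintype.card_prod, Fintype.card_set] using Nat.lt_succ_of_le hlong)
  obtain ⟨a, b, hab, hb, hT, hT'⟩ : ∃ a b : ℕ, a < b ∧ b ≤ w.length ∧
      transfer E ρ (w.take a) = transfer E ρ (w.take b) ∧
      transfer E' ρ' (w.take a) = transfer E' ρ' (w.take b) := by
    rcases Fin.lt_or_lt_of_ne hne with h | h
    · exact ⟨j₁, j₂, h, Nat.lt_succ_iff.mp j₂.2, congrArg Prod.fst hf, congrArg Prod.snd hf⟩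
    · exact ⟨j₂, j₁, h, Nat.lt_succ_iff.mp j₁.2, (congrArg Prod.fst hf).symm,
        (congrArg Prod.snd hf).symm⟩
  have hv := hshort (w.take a ++ w.drop b) (by simp; omega)
    (by rwa [mem_listLang_pathSet_iff, transfer_take_append_drop hT, ← mem_listLang_pathSet_iff])
  rw [mem_listLang_pathSet_iff, transfer_take_append_drop hT'] at hv
  exact hw' (mem_listLang_pathSet_iff.mpr hv)

end Transfer

lemma eventually_pow_pow_lt {φ : ℕ → ℕ}
    (hφ : (fun k => (φ k : ℝ)) =o[atTop] fun k => Real.log (Real.log k)) {Q : ℕ} (hQ : 2 ≤ Q)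
    (c : ℕ) : ∀ᶠ k in atTop, Q ^ Q ^ (c * (φ k + 1)) < k := by
  have hlogQ : 0 < Real.log Q := Real.log_pos (by exact_mod_cast hQ)
  have hg : Tendsto (fun k : ℕ => Real.log (Real.log k)) atTop atTop :=
    Real.tendsto_log_atTop.comp (Real.tendsto_log_atTop.comp tendsto_natCast_atTop_atTop)
  -- taking logarithms twice, `Q ^ Q ^ N < k` becomes `N log Q + log log Q < log log k`
  have hf : (fun k => ((c * (φ k + 1) : ℕ) : ℝ) * Real.log Q + Real.log (Real.log Q)) =o[atTop]
      fun k => Real.log (Real.log k) := by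
    have hconst : (fun _ : ℕ => c * Real.log Q + Real.log (Real.log Q)) =o[atTop]
        fun k => Real.log (Real.log k) :=
      isLittleO_const_left.mpr (Or.inr (tendsto_norm_atTop_atTop.comp hg))
    refine ((hφ.const_mul_left (c * Real.log Q)).add hconst).congr_left fun k => ?_
    push_cast
    ring
  filter_upwards [hf.bound one_half_pos, hg.eventually_gt_atTop 0, eventually_ge_atTop 2]
    with k hfk hgk hk2
  set N := c * (φ k + 1)
  have hlogk : 0 < Real.log k := Real.log_pos (by exact_mod_cast hk2)
  have h₁ : Real.log ((Q : ℝ) ^ N * Real.log Q) < Real.log (Real.log k) := by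
    rw [Real.log_mul (by positivity) hlogQ.ne', Real.log_pow]
    rw [Real.norm_of_nonneg hgk.le] at hfk
    linarith [(Real.le_norm_self _).trans hfk]
  have h₂ : Real.log ((Q : ℝ) ^ Q ^ N) < Real.log k := by
    rw [Real.log_pow, Nat.cast_pow]
    exact (Real.log_lt_log_iff (by positivity) hlogk).mp h₁
  exact_mod_cast (Real.log_lt_log_iff (by positivity) (by positivity)).mp h₂

lemma two_pow_mul_two_pow_le_pow_pow {x y Q e : ℕ} (hQ : 2 ≤ Q) (hx : x ≤ Q ^ e)
    (hy : y ≤ Q ^ e) : 2 ^ (x * x) * 2 ^ (y * y) ≤ Q ^ Q ^ (2 * e + 1) := by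
  have hsq : ∀ {x}, x ≤ Q ^ e → x * x ≤ Q ^ (2 * e) := fun hx => by
    rw [two_mul, pow_add]; exact Nat.mul_le_mul hx hx
  calc 2 ^ (x * x) * 2 ^ (y * y) = 2 ^ (x * x + y * y) := (pow_add _ _ _).symm
    _ ≤ 2 ^ (Q ^ (2 * e + 1)) := by
        refine Nat.pow_le_pow_right two_pos ?_
        rw [pow_succ]
        linarith [hsq hx, hsq hy, Nat.mul_le_mul_left (Q ^ (2 * e)) hQ]
    _ ≤ Q ^ Q ^ (2 * e + 1) := Nat.pow_le_pow_left hQ _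

theorem exists_listLang_subset_of_speed {A : Type*} {C : ℕ → Type*} [∀ n, Fintype (C n)]
    {S : Set (ℤ → A)} {E : ∀ n, SetRel (C n) (C n)} {ρ : ∀ n, C n → A}
    (hanti : Antitone fun n => pathSet (E n) (ρ n)) (hS : ∀ n, S ⊆ pathSet (E n) (ρ n))
    {Q c : ℕ} (hQ : 2 ≤ Q) (hcard : ∀ n, Fintype.card (C n) ≤ Q ^ (c * (n + 1)))
    {φ : ℕ → ℕ}
    (hφ : ∀ w : List A, w ∉ listLang S →
      w ∉ listLang (pathSet (E (φ w.length)) (ρ (φ w.length))))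
    (hlittle : (fun k => (φ k : ℝ)) =o[atTop] fun k => Real.log (Real.log k)) :
    ∃ n₀, listLang (pathSet (E n₀) (ρ n₀)) ⊆ listLang S := by
  obtain ⟨K, hK⟩ := eventually_atTop.mp (eventually_pow_pow_lt hlittle hQ (2 * c + 1))
  set n₀ := (Finset.range K).sup φ
  refine ⟨n₀, fun w => ?_⟩
  obtain ⟨k, hk⟩ : ∃ k, w.length = k := ⟨_, rfl⟩
  induction k using Nat.strong_induction_on generalizing w with
  | _ k IH =>
  intro hw
  by_contra hwS
  subst hk
  set m := φ w.length
  have hwm := hφ w hwS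
  have hn₀m : n₀ ≤ m := by
    by_contra! h
    exact hwm (listLang_mono (hanti h.le) hw)
  have hKw : K ≤ w.length := by
    by_contra! h
    have : m ≤ n₀ := Finset.le_sup (Finset.mem_range.mpr h)
    exact hwm (listLang_mono (hanti this) hw)
  have hlen := length_lt_of_forall_shorter_mem hw hwm fun v hv hvT =>
    listLang_mono (hS m) (IH _ hv v rfl hvT)
  have hbound : 2 ^ (Fintype.card (C n₀) * Fintype.card (C n₀)) *
      2 ^ (Fintype.card (C m) * Fintype.card (C m)) ≤ Q ^ Q ^ ((2 * c + 1) * (m + 1)) := by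
    refine (two_pow_mul_two_pow_le_pow_pow hQ ((hcard n₀).trans ?_) (hcard m)).trans ?_
    · exact Nat.pow_le_pow_right (by omega) (Nat.mul_le_mul_left c (by omega))
    · exact Nat.pow_le_pow_right (by omega) (Nat.pow_le_pow_right (by omega) (by nlinarith))
  exact (hK _ hKw).not_gt (hlen.trans_le hbound)

section Windows

variable {A B : Type*} {L n : ℕ}

abbrev Window (B : Type*) (L n : ℕ) : Type _ := Fin (L + 1) → Finset.Icc (-(n : ℤ)) n → B

lemma zero_mem_Icc_neg (n : ℕ) : (0 : ℤ) ∈ Finset.Icc (-(n : ℤ)) n := by simp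

def windowAt (L n : ℕ) (x : ℤ × ℤ → B) (i : ℤ) : Window B L n := fun j r => x (i + j, r)

def Window.Avoids (F : Set (Pat2 B)) (c : Window B L n) : Prop :=
  ∀ p ∈ F, ∀ t : ℤ × ℤ, ¬ ∀ u ∈ p.supp, ∃ (j : Fin (L + 1)) (r : Finset.Icc (-(n : ℤ)) n),
    u + t = (((j : ℕ) : ℤ), (r : ℤ)) ∧ p.val u = c j r

def windowEdge (F : Set (Pat2 B)) (L n : ℕ) : SetRel (Window B L n) (Window B L n) :=
  {cc | cc.1.Avoids F ∧ ∀ j j' : Fin (L + 1), (j' : ℕ) = j + 1 → cc.1 j' = cc.2 j}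

def windowLetter (π : B → A) (c : Window B L n) : A := π (c 0 ⟨0, zero_mem_Icc_neg n⟩)

/-- Rows outside the strip are filled with junk. -/
noncomputable def ofWindows (z : ℤ → Window B L n) (v : ℤ × ℤ) : B :=
  if h : v.2 ∈ Finset.Icc (-(n : ℤ)) n then z v.1 0 ⟨v.2, h⟩ else z v.1 0 ⟨0, zero_mem_Icc_neg n⟩

lemma windowAt_ofWindows {F : Set (Pat2 B)} {z : ℤ → Window B L n}
    (hz : IsWalk (windowEdge F L n) z) (i : ℤ) : windowAt L n (ofWindows z) i = z i := by
  have hcoh : ∀ (d : ℕ) (i : ℤ) (j : Fin (L + 1)), (j : ℕ) = d → z i j = z (i + d) 0 := by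
    intro d
    induction d with
    | zero =>
      intro i j hj
      obtain rfl : j = 0 := Fin.ext hj
      rw [Nat.cast_zero, add_zero]
    | succ d ih =>
      intro i j hj
      have hstep : z i j = z (i + 1) ⟨d, by omega⟩ := (hz i).2 ⟨d, by omega⟩ j hj
      rw [hstep, ih (i + 1) ⟨d, by omega⟩ rfl]
      push_cast; ring_nf
  funext j r
  simp only [windowAt, ofWindows, dif_pos r.2, hcoh j i j rfl]

lemma windowAt_avoids_of_avoidsStrip2 {F : Set (Pat2 B)} {x : ℤ × ℤ → B}
    (hx : avoidsStrip2 F n x) (i : ℤ) : (windowAt L n x i).Avoids F := by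
  intro p hp t hocc
  choose j r hpos hval using hocc
  refine hx p hp (t + (i, 0)) (fun u hu => ?_) (fun u hu => ?_)
  · rw [← add_assoc, Prod.snd_add, hpos u hu, add_zero, abs_le]
    exact Finset.mem_Icc.mp (r u hu).2
  · rw [hval u hu, windowAt, ← add_assoc, hpos u hu]
    congr 1
    ext <;> simp [add_comm]

lemma avoidsStrip2_of_forall_windowAt_avoids {F : Set (Pat2 B)} {W : ℕ}
    (hW : ∀ p ∈ F, ∀ u ∈ p.supp, |u.1| ≤ W) {x : ℤ × ℤ → B}
    (hx : ∀ i, (windowAt (2 * W) n x i).Avoids F) : avoidsStrip2 F n x := by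
  intro p hp t hstrip hocc
  refine hx (t.1 - W) p hp (W, t.2) fun u hu => ?_
  have hu₁ := abs_le.mp (hW p hp u hu)
  refine ⟨⟨(u.1 + W).toNat, by omega⟩, ⟨u.2 + t.2, Finset.mem_Icc.mpr (abs_le.mp (hstrip u hu))⟩,
    ?_, ?_⟩
  · ext <;> simp; omega
  · rw [hocc u hu, windowAt]
    congr 1
    ext <;> simp; omega

lemma exists_abs_fst_le_of_finite {F : Set (Pat2 B)} (hF : F.Finite) :
    ∃ W : ℕ, ∀ p ∈ F, ∀ u ∈ p.supp, |u.1| ≤ W := by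
  obtain ⟨W, hW⟩ :=
    ((hF.biUnion fun p _ => p.supp.finite_toSet).image fun u : ℤ × ℤ => u.1.natAbs).bddAbove
  refine ⟨W, fun p hp u hu => ?_⟩
  rw [Int.abs_eq_natAbs]
  exact_mod_cast hW ⟨u, Set.mem_biUnion hp hu, rfl⟩

theorem rowApprox2_eq_pathSet {F : Set (Pat2 B)} {W : ℕ} (hW : ∀ p ∈ F, ∀ u ∈ p.supp, |u.1| ≤ W)
    (π : B → A) (n : ℕ) :
    RowApprox2 F π n = pathSet (windowEdge F (2 * W) n) (windowLetter π) := by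
  ext y
  constructor
  · rintro ⟨x, hx, hy⟩
    refine ⟨windowAt (2 * W) n x,
      fun i => ⟨windowAt_avoids_of_avoidsStrip2 hx i, fun j j' hj => ?_⟩, fun i => ?_⟩
    · funext r
      simp only [windowAt, hj]
      push_cast; ring_nf
    · simp [hy i, windowLetter, windowAt]
  · rintro ⟨z, hz, hy⟩
    refine ⟨ofWindows z, avoidsStrip2_of_forall_windowAt_avoids hW fun i => ?_, fun i => ?_⟩
    · simpa only [windowAt_ofWindows hz] using (hz i).1
    · rw [hy i, windowLetter, ← windowAt_ofWindows hz i]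
      simp [windowAt]

lemma card_window_le [Fintype B] (L n : ℕ) :
    Fintype.card (Window B L n) ≤ (Fintype.card B + 2) ^ (2 * (L + 1) * (n + 1)) := by
  calc Fintype.card (Window B L n) = Fintype.card B ^ ((2 * n + 1) * (L + 1)) := by
        simp only [Fintype.card_fun, Fintype.card_coe, Int.card_Icc, Fintype.card_fin, ← pow_mul]
        congr 2
        omega
    _ ≤ (Fintype.card B + 2) ^ ((2 * n + 1) * (L + 1)) := Nat.pow_le_pow_left (by omega) _
    _ ≤ (Fintype.card B + 2) ^ (2 * (L + 1) * (n + 1)) :=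
        Nat.pow_le_pow_right (by omega) (by nlinarith)

end Windows

section Subaction

variable {A B : Type*} {F : Set (Pat2 B)} {π : B → A}

lemma rowApprox2_antitone : Antitone (RowApprox2 F π) := by
  rintro n n' hn y ⟨x, hx, hy⟩
  exact ⟨x, fun p hp t ht => hx p hp t fun u hu => (ht u hu).trans (by exact_mod_cast hn), hy⟩

lemma sArow2_subset_rowApprox2 (n : ℕ) : SArow2 F π ⊆ RowApprox2 F π n := by
  rintro y ⟨x, hx, hy⟩
  exact ⟨x, fun p hp t _ hocc => hx p hp ⟨t, hocc⟩, hy⟩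

lemma shift_mem_sArow2 {y : ℤ → A} (hy : y ∈ SArow2 F π) (s : ℤ) :
    (fun i => y (s + i)) ∈ SArow2 F π := by
  obtain ⟨x, hx, hxy⟩ := hy
  refine ⟨fun v => x (v + (s, 0)), fun p hp ⟨t, ht⟩ => hx p hp ⟨t + (s, 0), fun u hu => ?_⟩,
    fun i => by simp [hxy, add_comm]⟩
  rw [ht u hu]
  exact congrArg x (add_assoc u t (s, 0))

lemma isClosed_sArow2 [Finite B] [TopologicalSpace A] [DiscreteTopology A] :
    IsClosed (SArow2 F π) := by
  let _ : TopologicalSpace B := ⊥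
  have _ : DiscreteTopology B := ⟨rfl⟩
  have hcyl : ∀ (p : Pat2 B) (t : ℤ × ℤ),
      IsOpen {x : ℤ × ℤ → B | ∀ u ∈ p.supp, p.val u = x (u + t)} := fun p t => by
    simp only [Set.ofPred_forall]
    exact isOpen_biInter_finset fun u _ =>
      (isOpen_discrete {b : B | p.val u = b}).preimage (continuous_apply (u + t))
  have hX : IsClosed {x : ℤ × ℤ → B | avoids2 F x} := by
    have : {x : ℤ × ℤ → B | avoids2 F x} =
        ⋂ p ∈ F, ⋂ t, {x | ∀ u ∈ p.supp, p.val u = x (u + t)}ᶜ := by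
      ext x; simp [avoids2]
    rw [this]
    exact isClosed_biInter fun p _ => isClosed_iInter fun t => (hcyl p t).isClosed_compl
  have himage : SArow2 F π = (fun x i => π (x (i, 0))) '' {x | avoids2 F x} := by
    ext y
    constructor
    · rintro ⟨x, hx, hy⟩
      exact ⟨x, hx, funext fun i => (hy i).symm⟩
    · rintro ⟨x, hx, rfl⟩
      exact ⟨x, hx, fun i => rfl⟩
  rw [himage]
  exact (hX.isCompact.image (continuous_pi fun i =>
    continuous_of_discreteTopology.comp (continuous_apply (i, 0)))).isClosed

lemma IsClosed.mem_of_forall_exists_eqOn_Icc [TopologicalSpace A] [DiscreteTopology A]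
    {S : Set (ℤ → A)} (hS : IsClosed S) {y : ℤ → A}
    (h : ∀ r : ℕ, ∃ y' ∈ S, ∀ i : ℤ, |i| ≤ r → y' i = y i) : y ∈ S := by
  choose y' hy'S hy' using h
  have hlim : Tendsto y' atTop (𝓝 y) := tendsto_pi_nhds.mpr fun i => by
    rw [nhds_discrete, tendsto_pure]
    filter_upwards [eventually_ge_atTop i.natAbs] with r hr
    exact hy' r i (by rw [Int.abs_eq_natAbs]; exact_mod_cast hr)
  exact hS.mem_of_tendsto hlim (Eventually.of_forall hy'S)

theorem subset_sArow2_of_listLang_subset [Finite B] {S : Set (ℤ → A)}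
    (h : listLang S ⊆ listLang (SArow2 F π)) : S ⊆ SArow2 F π := by
  let _ : TopologicalSpace A := ⊥
  have _ : DiscreteTopology A := ⟨rfl⟩
  intro y hy
  refine isClosed_sArow2.mem_of_forall_exists_eqOn_Icc fun r => ?_
  have hw : (List.ofFn fun i : Fin (2 * r + 1) => y (-r + i)) ∈ listLang S :=
    ⟨y, hy, -r, fun i hi => List.getElem_ofFn _⟩
  obtain ⟨y', hy', t, ht⟩ := h hw
  refine ⟨fun i => y' (t + r + i), shift_mem_sArow2 hy' _, fun i hi => ?_⟩
  obtain ⟨hi₁, hi₂⟩ := abs_le.mp hi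
  have hj : ((i + r).toNat : ℤ) = i + r := Int.toNat_of_nonneg (by omega)
  have := ht (i + r).toNat (by simp; omega)
  rw [List.getElem_ofFn, hj, neg_add_cancel_comm_assoc] at this
  rw [this, add_comm i, ← add_assoc]

end Subaction

theorem o_loglog_speed_implies_sofic_general {A B : Type*} [Fintype B]
    (F : Set (Pat2 B)) (hF : F.Finite) (π : B → A) (φ : ℕ → ℕ)
    (hφ : ∀ k : ℕ, ∀ u : Fin k → A,
      u ∉ wordLang (SArow2 F π) k → u ∉ wordLang (RowApprox2 F π (φ k)) k)
    (hlittle : (fun k : ℕ => (φ k : ℝ)) =o[Filter.atTop]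
      fun k : ℕ => Real.log (Real.log (k : ℝ))) :
    ∃ (C : Type) (_ : Fintype C) (E : Set (C × C)) (ρ : C → A),
      SArow2 F π =
        {y : ℤ → A | ∃ z : ℤ → C, (∀ i : ℤ, (z i, z (i + 1)) ∈ E) ∧
          ∀ i : ℤ, y i = ρ (z i)} := by
  obtain ⟨W, hW⟩ := exists_abs_fst_le_of_finite hF
  have hT := rowApprox2_eq_pathSet hW π
  obtain ⟨n₀, hn₀⟩ := exists_listLang_subset_of_speed (S := SArow2 F π)
    (E := windowEdge F (2 * W)) (ρ := fun _ => windowLetter π)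
    (by simpa only [← hT] using rowApprox2_antitone)
    (by simpa only [← hT] using sArow2_subset_rowApprox2)
    (Nat.le_add_left 2 _) (card_window_le (2 * W))
    (fun w hw => by
      rw [mem_listLang_iff_get_mem_wordLang] at hw
      simpa only [← hT, mem_listLang_iff_get_mem_wordLang] using hφ _ _ hw)
    hlittle
  rw [← hT] at hn₀
  have hstable : SArow2 F π = RowApprox2 F π n₀ :=
    (sArow2_subset_rowApprox2 n₀).antisymm (subset_sArow2_of_listLang_subset hn₀)
  obtain ⟨E, ρ, hE⟩ := exists_pathSet_eq_of_fintype (windowEdge F (2 * W) n₀) (windowLetter π)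
  exact ⟨_, inferInstance, E, ρ, by rw [hstable, hT, ← hE]; rfl⟩

/-- Sofic realization statement: if a one-dimensional subshift is realized as the
projective subaction of a two-dimensional SFT composed with a letter-to-letter factor
map with speed of convergence `φ(k) ∈ o(log log k)`, then it is sofic: it is the image
under a letter-to-letter map of a one-dimensional nearest-neighbour SFT over a finite
alphabet. -/
theorem o_loglog_speed_implies_sofic {A B : Type*} [Fintype A] [Fintype B]
    (F : Set (Pat2 B)) (hF : F.Finite) (π : B → A) (φ : ℕ → ℕ)
    (hφ : ∀ k : ℕ, ∀ u : Fin k → A,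
      u ∉ wordLang (SArow2 F π) k → u ∉ wordLang (RowApprox2 F π (φ k)) k)
    (hlittle : (fun k : ℕ => (φ k : ℝ)) =o[Filter.atTop]
      fun k : ℕ => Real.log (Real.log (k : ℝ))) :
    ∃ (C : Type) (_ : Fintype C) (E : Set (C × C)) (ρ : C → A),
      SArow2 F π =
        {y : ℤ → A | ∃ z : ℤ → C, (∀ i : ℤ, (z i, z (i + 1)) ∈ E) ∧
          ∀ i : ℤ, y i = ρ (z i)} :=
  o_loglog_speed_implies_sofic_general F hF π φ hφ hlittle
end
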